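/- arXiv:2603.00019 — 7 statements merged into one kernel-verified Lean document; each statement's English description precedes it below -/
import Mathlib

section
/- If two points P₁ and P₂ both lie in the [x,z] coordinate plane (i.e., have y-coordinate 0), then the Nil translation curve from P₁ to P₂ is the Euclidean straight line segment between them. -/
/-- The Nil translation mapping the origin to (a,b,c). -/
def nilTrans (P Q : ℝ × ℝ × ℝ) : ℝ × ℝ × ℝ :=
  (Q.1 + P.1, Q.2.1 + P.2.1, Q.2.2 + P.2.1 * Q.1 + P.2.2)

/-- The Nil translation curve from the origin with initial tangent (u,v,w). -/
noncomputable def nilCurve (u v w t : ℝ) : ℝ × ℝ × ℝ :=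
  (u * t, v * t, (1 / 2) * u * v * t ^ 2 + w * t)

/-- If P₁ and P₂ both lie in the [x,z] coordinate plane (y-coordinate 0), then the
Nil translation curve from P₁ to P₂ is the Euclidean straight line segment between
them: it is the affine parametrization t ↦ P₁ + t·(P₂ − P₁). -/
theorem nil_curve_in_xz_plane_is_segment (P₁ P₂ : ℝ × ℝ × ℝ)
    (h₁ : P₁.2.1 = 0) (h₂ : P₂.2.1 = 0) :
    ∃ u v w : ℝ, nilTrans P₁ (nilCurve u v w 1) = P₂ ∧
      ∀ t : ℝ, nilTrans P₁ (nilCurve u v w t) = P₁ + t • (P₂ - P₁) := by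
  refine ⟨P₂.1 - P₁.1, 0, P₂.2.2 - P₁.2.2, ?_, ?_⟩ <;>
    simp only [nilTrans, nilCurve, Prod.ext_iff, Prod.mk_add_mk, Prod.fst_add, Prod.snd_add,
      Prod.fst_sub, Prod.snd_sub, Prod.smul_fst, Prod.smul_snd, smul_eq_mul, h₁, h₂] <;>
  · try intro t
    constructor
    · ring
    constructor <;> simp [Prod.smul_fst, Prod.smul_snd, h₁, h₂] <;> ring
end

section
/- If two points P₁ and P₂ both lie in the [y,z] coordinate plane (i.e., have x-coordinate 0), then the Nil translation curve from P₁ to P₂ is the Euclidean straight line segment between them. -/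
/-- If P₁ and P₂ both lie in the [y,z] coordinate plane (x-coordinate 0), then the
Nil translation curve from P₁ to P₂ is the Euclidean straight line segment between
them: it is the affine parametrization t ↦ P₁ + t·(P₂ − P₁). -/
theorem nil_curve_in_yz_plane_is_segment (P₁ P₂ : ℝ × ℝ × ℝ)
    (h₁ : P₁.1 = 0) (h₂ : P₂.1 = 0) :
    ∃ u v w : ℝ, nilTrans P₁ (nilCurve u v w 1) = P₂ ∧
      ∀ t : ℝ, nilTrans P₁ (nilCurve u v w t) = P₁ + t • (P₂ - P₁) := by
  refine ⟨0, P₂.2.1 - P₁.2.1, P₂.2.2 - P₁.2.2, ?_, fun t => ?_⟩ <;>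
    simp [nilTrans, nilCurve, Prod.ext_iff, h₁, h₂, Prod.smul_def, smul_eq_mul] <;>
    constructor <;> ring
end

section
/- Menelaus implies Desargues (ratio form): Let s be a function assigning to each ordered triple of distinct points on a line a nonzero real 'simple ratio' satisfying s(A,P,B)·s(B,P,A) = 1, and suppose Menelaus' theorem holds: three points on the sides of a triangle are collinear iff the product of the three simple ratios equals −1. Then for two triangles A₁A₂A₃ and B₁B₂B₃ perspective from a point S, with M₁₂, M₁₃, M₂₃ the intersections of corresponding sides, the three Menelaus products from the triangles SA₃A₁, SA₂A₃, SA₁A₂ multiply to give s(A₁,M₁₃,A₃)·s(A₃,M₂₃,A₂)·s(A₂,M₁₂,A₁) = −1, hence M₁₂, M₁₃, M₂₃ are collinear. -/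
/-- An abstract incidence structure with a signed simple ratio satisfying Menelaus'
theorem (with its converse) and the reciprocity identity s(A,P,B)·s(B,P,A) = 1. -/
structure MenelausGeometry where
  Pt : Type*
  /-- collinearity of three points (lying on a common translation curve) -/
  Col : Pt → Pt → Pt → Prop
  /-- the signed simple ratio of three collinear points -/
  s : Pt → Pt → Pt → ℝ
  col_swap_left : ∀ A B C, Col A B C → Col B A C
  col_swap_right : ∀ A B C, Col A B C → Col A C B
  s_ne_zero : ∀ A P B, s A P B ≠ 0
  s_recip : ∀ A P B, s A P B * s B P A = 1
  /-- Menelaus' theorem and its converse: for a triangle X₀X₁X₂ and points P, Q, R on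
  the lines X₀X₁, X₁X₂, X₂X₀ respectively, P, Q, R are collinear iff the product of
  the three simple ratios is −1. -/
  menelaus : ∀ X₀ X₁ X₂ P Q R, Col X₀ P X₁ → Col X₁ Q X₂ → Col X₂ R X₀ →
    (Col P Q R ↔ s X₀ P X₁ * s X₁ Q X₂ * s X₂ R X₀ = -1)

/-- Menelaus implies Desargues (ratio form): if triangles A₁A₂A₃ and B₁B₂B₃ are
perspective from the point S and M₁₂, M₁₃, M₂₃ are the intersections of corresponding
sides, then the three Menelaus products for triangles SA₃A₁, SA₂A₃, SA₁A₂ multiply to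
give s(A₁,M₁₃,A₃)·s(A₃,M₂₃,A₂)·s(A₂,M₁₂,A₁) = −1, hence M₁₂, M₁₃, M₂₃ are collinear. -/
theorem menelaus_implies_desargues (G : MenelausGeometry)
    (S A₁ A₂ A₃ B₁ B₂ B₃ M₁₂ M₁₃ M₂₃ : G.Pt)
    (hB₁ : G.Col S B₁ A₁) (hB₂ : G.Col S B₂ A₂) (hB₃ : G.Col S B₃ A₃)
    (hM₁₂A : G.Col A₂ M₁₂ A₁) (hM₁₂B : G.Col B₁ M₁₂ B₂)
    (hM₁₃A : G.Col A₁ M₁₃ A₃) (hM₁₃B : G.Col B₁ M₁₃ B₃)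
    (hM₂₃A : G.Col A₃ M₂₃ A₂) (hM₂₃B : G.Col B₂ M₂₃ B₃) :
    G.s A₁ M₁₃ A₃ * G.s A₃ M₂₃ A₂ * G.s A₂ M₁₂ A₁ = -1 ∧ G.Col M₁₂ M₁₃ M₂₃ := by
  have rev : ∀ A B C, G.Col A B C → G.Col C B A := fun A B C h =>
    G.col_swap_right _ _ _ (G.col_swap_left _ _ _ (G.col_swap_right _ _ _ h))
  -- three Menelaus relations
  have h1 : G.s S B₁ A₁ * G.s A₁ M₁₃ A₃ * G.s A₃ B₃ S = -1 :=
    (G.menelaus S A₁ A₃ B₁ M₁₃ B₃ hB₁ hM₁₃A (rev _ _ _ hB₃)).mp hM₁₃B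
  have h2 : G.s S B₃ A₃ * G.s A₃ M₂₃ A₂ * G.s A₂ B₂ S = -1 :=
    (G.menelaus S A₃ A₂ B₃ M₂₃ B₂ hB₃ hM₂₃A (rev _ _ _ hB₂)).mp
      (rev _ _ _ hM₂₃B)
  have h3 : G.s S B₂ A₂ * G.s A₂ M₁₂ A₁ * G.s A₁ B₁ S = -1 :=
    (G.menelaus S A₂ A₁ B₂ M₁₂ B₁ hB₂ hM₁₂A (rev _ _ _ hB₁)).mp
      (rev _ _ _ hM₁₂B)
  have r1 := G.s_recip S B₁ A₁
  have r2 := G.s_recip S B₂ A₂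
  have r3 := G.s_recip S B₃ A₃
  have key : G.s A₁ M₁₃ A₃ * G.s A₃ M₂₃ A₂ * G.s A₂ M₁₂ A₁ = -1 := by
    have hprod : (G.s S B₁ A₁ * G.s A₁ M₁₃ A₃ * G.s A₃ B₃ S) *
        (G.s S B₃ A₃ * G.s A₃ M₂₃ A₂ * G.s A₂ B₂ S) *
        (G.s S B₂ A₂ * G.s A₂ M₁₂ A₁ * G.s A₁ B₁ S) = -1 := by
      rw [h1, h2, h3]; ring
    calc G.s A₁ M₁₃ A₃ * G.s A₃ M₂₃ A₂ * G.s A₂ M₁₂ A₁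
        = ((G.s S B₁ A₁ * G.s A₁ B₁ S) * (G.s S B₂ A₂ * G.s A₂ B₂ S) *
          (G.s S B₃ A₃ * G.s A₃ B₃ S)) *
          (G.s A₁ M₁₃ A₃ * G.s A₃ M₂₃ A₂ * G.s A₂ M₁₂ A₁) := by
          rw [r1, r2, r3]; ring
      _ = (G.s S B₁ A₁ * G.s A₁ M₁₃ A₃ * G.s A₃ B₃ S) *
          (G.s S B₃ A₃ * G.s A₃ M₂₃ A₂ * G.s A₂ B₂ S) *
          (G.s S B₂ A₂ * G.s A₂ M₁₂ A₁ * G.s A₁ B₁ S) := by ring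
      _ = -1 := hprod
  refine ⟨key, ?_⟩
  have := (G.menelaus A₁ A₃ A₂ M₁₃ M₂₃ M₁₂ hM₁₃A hM₂₃A hM₁₂A).mpr key
  exact G.col_swap_left _ _ _ (G.col_swap_right _ _ _ this)
end

section
/- Menelaus implies Pappus (ratio form): In an abstract incidence structure with simple ratio s satisfying Menelaus' theorem and its converse, let A₁, A₂, A₃ lie on one line, B₁, B₂, B₃ on another, and define C₁₂ = A₁B₁ ∩ A₂B₂, C₁₃ = A₁B₁ ∩ A₃B₃, C₂₃ = A₂B₂ ∩ A₃B₃ (assumed to exist and form a triangle). Then, multiplying the five Menelaus relations for triangle C₁₂C₁₃C₂₃ with the collinear triples (A₃,B₂,M₁), (A₁,B₃,M₂), (B₁,A₂,M₃), (A₁,A₂,A₃), (B₁,B₂,B₃), and cancelling, one obtains s(C₁₂,M₂,C₂₃)·s(C₂₃,M₃,C₁₃)·s(C₁₃,M₁,C₁₂) = −1, hence M₁, M₂, M₃ are collinear. -/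
/-- Menelaus implies Pappus (ratio form): with A₁, A₂, A₃ on one line, B₁, B₂, B₃ on
another, C₁₂ = A₁B₁ ∩ A₂B₂, C₁₃ = A₁B₁ ∩ A₃B₃, C₂₃ = A₂B₂ ∩ A₃B₃ forming a triangle,
and M₁ = A₁B₁ ∩ A₃B₂, M₂ = A₂B₂ ∩ A₁B₃, M₃ = A₃B₃ ∩ A₂B₁, multiplying the five
Menelaus relations for triangle C₁₂C₁₃C₂₃ with the collinear triples (A₃,B₂,M₁),
(A₁,B₃,M₂), (B₁,A₂,M₃), (A₁,A₂,A₃), (B₁,B₂,B₃) yields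
s(C₁₂,M₂,C₂₃)·s(C₂₃,M₃,C₁₃)·s(C₁₃,M₁,C₁₂) = −1, hence M₁, M₂, M₃ are collinear. -/
theorem menelaus_implies_pappus (G : MenelausGeometry)
    (A₁ A₂ A₃ B₁ B₂ B₃ C₁₂ C₁₃ C₂₃ M₁ M₂ M₃ : G.Pt)
    (hA : G.Col A₁ A₂ A₃) (hB : G.Col B₁ B₂ B₃)
    -- membership of the relevant points on the sides of the triangle C₁₂C₁₃C₂₃
    (hB₂side : G.Col C₁₂ B₂ C₂₃) (hA₃side : G.Col C₂₃ A₃ C₁₃) (hM₁side : G.Col C₁₃ M₁ C₁₂)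
    (hM₂side : G.Col C₁₂ M₂ C₂₃) (hB₃side : G.Col C₂₃ B₃ C₁₃) (hA₁side : G.Col C₁₃ A₁ C₁₂)
    (hA₂side : G.Col C₁₂ A₂ C₂₃) (hM₃side : G.Col C₂₃ M₃ C₁₃) (hB₁side : G.Col C₁₃ B₁ C₁₂)
    -- the three collinear triples cutting the triangle
    (h₁ : G.Col A₃ B₂ M₁) (h₂ : G.Col A₁ B₃ M₂) (h₃ : G.Col B₁ A₂ M₃) :
    G.s C₁₂ M₂ C₂₃ * G.s C₂₃ M₃ C₁₃ * G.s C₁₃ M₁ C₁₂ = -1 ∧ G.Col M₁ M₂ M₃ := by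

  -- Menelaus relations
  have e1 := (G.menelaus C₁₂ C₂₃ C₁₃ B₂ A₃ M₁ hB₂side hA₃side hM₁side).mp
    (G.col_swap_left _ _ _ h₁)
  have e2 := (G.menelaus C₁₂ C₂₃ C₁₃ M₂ B₃ A₁ hM₂side hB₃side hA₁side).mp
    (G.col_swap_left _ _ _ (G.col_swap_right _ _ _ (G.col_swap_left _ _ _ h₂)))
  have e3 := (G.menelaus C₁₂ C₂₃ C₁₃ A₂ M₃ B₁ hA₂side hM₃side hB₁side).mp
    (G.col_swap_right _ _ _ (G.col_swap_left _ _ _ h₃))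
  have e4 := (G.menelaus C₁₂ C₂₃ C₁₃ A₂ A₃ A₁ hA₂side hA₃side hA₁side).mp
    (G.col_swap_right _ _ _ (G.col_swap_left _ _ _ hA))
  have e5 := (G.menelaus C₁₂ C₂₃ C₁₃ B₂ B₃ B₁ hB₂side hB₃side hB₁side).mp
    (G.col_swap_right _ _ _ (G.col_swap_left _ _ _ hB))
  have key : G.s C₁₂ M₂ C₂₃ * G.s C₂₃ M₃ C₁₃ * G.s C₁₃ M₁ C₁₂ = -1 := by
    have h4 : G.s C₁₂ A₂ C₂₃ ≠ 0 := G.s_ne_zero _ _ _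
    have h5 : G.s C₂₃ A₃ C₁₃ ≠ 0 := G.s_ne_zero _ _ _
    have h6 : G.s C₁₃ A₁ C₁₂ ≠ 0 := G.s_ne_zero _ _ _
    have h7 : G.s C₁₂ B₂ C₂₃ ≠ 0 := G.s_ne_zero _ _ _
    have h8 : G.s C₂₃ B₃ C₁₃ ≠ 0 := G.s_ne_zero _ _ _
    have h9 : G.s C₁₃ B₁ C₁₂ ≠ 0 := G.s_ne_zero _ _ _
    have hprod : (G.s C₁₂ M₂ C₂₃ * G.s C₂₃ M₃ C₁₃ * G.s C₁₃ M₁ C₁₂) *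
        ((G.s C₁₂ A₂ C₂₃ * G.s C₂₃ A₃ C₁₃ * G.s C₁₃ A₁ C₁₂) *
         (G.s C₁₂ B₂ C₂₃ * G.s C₂₃ B₃ C₁₃ * G.s C₁₃ B₁ C₁₂)) =
        (G.s C₁₂ B₂ C₂₃ * G.s C₂₃ A₃ C₁₃ * G.s C₁₃ M₁ C₁₂) *
        (G.s C₁₂ M₂ C₂₃ * G.s C₂₃ B₃ C₁₃ * G.s C₁₃ A₁ C₁₂) *
        (G.s C₁₂ A₂ C₂₃ * G.s C₂₃ M₃ C₁₃ * G.s C₁₃ B₁ C₁₂) := by ring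
    rw [e1, e2, e3, e4, e5] at hprod
    linarith
  refine ⟨key, ?_⟩
  have hcol := (G.menelaus C₁₂ C₂₃ C₁₃ M₂ M₃ M₁ hM₂side hM₃side hM₁side).mpr key
  exact G.col_swap_right _ _ _ (G.col_swap_left _ _ _
    (G.col_swap_right _ _ _ (G.col_swap_left _ _ _ hcol)))
end

section
/- Desargues' theorem for Euclidean plane via Menelaus: If triangles A₁A₂A₃ and B₁B₂B₃ in ℝ² are perspective from a point S (i.e., S, Aᵢ, Bᵢ are collinear for i = 1,2,3, with all points distinct and no degenerate collinearities), and the intersection points M₁₂ = line(A₁A₂) ∩ line(B₁B₂), M₁₃ = line(A₁A₃) ∩ line(B₁B₃), M₂₃ = line(A₂A₃) ∩ line(B₂B₃) exist, then M₁₂, M₁₃, M₂₃ are collinear. -/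
def cr (u v : ℝ × ℝ) : ℝ := u.1 * v.2 - u.2 * v.1

lemma exists_smul_of_cr {u w : ℝ × ℝ} (h : cr u w = 0) (hu : u ≠ 0) :
    ∃ r : ℝ, w = r • u := by
  have hu' : u.1 ≠ 0 ∨ u.2 ≠ 0 := by
    by_contra hc
    push_neg at hc
    exact hu (Prod.ext hc.1 hc.2)
  unfold cr at h
  rcases hu' with h1 | h1
  · refine ⟨w.1 / u.1, Prod.ext ?_ ?_⟩
    · simp only [Prod.smul_fst, smul_eq_mul]
      field_simp
    · simp only [Prod.smul_snd, smul_eq_mul]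
      field_simp
      linear_combination h
  · refine ⟨w.2 / u.2, Prod.ext ?_ ?_⟩
    · simp only [Prod.smul_fst, smul_eq_mul]
      field_simp
      linear_combination -h
    · simp only [Prod.smul_snd, smul_eq_mul]
      field_simp

lemma collinear_iff_cr (a b c : ℝ × ℝ) :
    Collinear ℝ ({a, b, c} : Set (ℝ × ℝ)) ↔ cr (b - a) (c - a) = 0 := by
  constructor
  · intro h
    rw [collinear_iff_of_mem (Set.mem_insert a _)] at h
    obtain ⟨v, hv⟩ := h
    obtain ⟨rb, hb⟩ := hv b (by simp)
    obtain ⟨rc, hc⟩ := hv c (by simp)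
    rw [hb, hc]
    simp only [vadd_eq_add, cr, Prod.fst_add, Prod.snd_add, Prod.fst_sub, Prod.snd_sub,
      Prod.smul_fst, Prod.smul_snd, smul_eq_mul, add_sub_cancel_right]
    ring
  · intro h
    rcases eq_or_ne b a with rfl | hba
    · have : ({b, b, c} : Set (ℝ × ℝ)) = {b, c} := by simp
      rw [this]
      exact collinear_pair ℝ b c
    · obtain ⟨r, hr⟩ := exists_smul_of_cr h (sub_ne_zero.mpr hba)
      rw [collinear_iff_of_mem (Set.mem_insert a _)]
      refine ⟨b - a, fun p hp => ?_⟩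
      simp only [Set.mem_insert_iff, Set.mem_singleton_iff] at hp
      rcases hp with rfl | rfl | rfl
      · exact ⟨0, by simp⟩
      · exact ⟨1, by rw [one_smul, vadd_eq_add]; abel⟩
      · exact ⟨r, by rw [vadd_eq_add, ← hr]; abel⟩


/-- Desargues' theorem in the Euclidean plane ℝ²: if triangles A₁A₂A₃ and B₁B₂B₃ are
perspective from a point S, and the intersection points M₁₂ = A₁A₂ ∩ B₁B₂,
M₁₃ = A₁A₃ ∩ B₁B₃, M₂₃ = A₂A₃ ∩ B₂B₃ exist, then M₁₂, M₁₃, M₂₃ are collinear. -/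
theorem desargues_euclidean_plane
    (S A₁ A₂ A₃ B₁ B₂ B₃ M₁₂ M₁₃ M₂₃ : ℝ × ℝ)
    (hA : ¬ Collinear ℝ ({A₁, A₂, A₃} : Set (ℝ × ℝ)))
    (hB : ¬ Collinear ℝ ({B₁, B₂, B₃} : Set (ℝ × ℝ)))
    (hAB : A₁ ≠ B₁ ∧ A₂ ≠ B₂ ∧ A₃ ≠ B₃)
    (hS : S ≠ A₁ ∧ S ≠ A₂ ∧ S ≠ A₃ ∧ S ≠ B₁ ∧ S ≠ B₂ ∧ S ≠ B₃)
    -- perspective from the point S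
    (hp₁ : Collinear ℝ ({S, A₁, B₁} : Set (ℝ × ℝ)))
    (hp₂ : Collinear ℝ ({S, A₂, B₂} : Set (ℝ × ℝ)))
    (hp₃ : Collinear ℝ ({S, A₃, B₃} : Set (ℝ × ℝ)))
    -- corresponding side lines are distinct (no degenerate coincidences)
    (hd₁₂ : ¬ (Collinear ℝ ({A₁, A₂, B₁} : Set (ℝ × ℝ)) ∧
               Collinear ℝ ({A₁, A₂, B₂} : Set (ℝ × ℝ))))
    (hd₁₃ : ¬ (Collinear ℝ ({A₁, A₃, B₁} : Set (ℝ × ℝ)) ∧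
               Collinear ℝ ({A₁, A₃, B₃} : Set (ℝ × ℝ))))
    (hd₂₃ : ¬ (Collinear ℝ ({A₂, A₃, B₂} : Set (ℝ × ℝ)) ∧
               Collinear ℝ ({A₂, A₃, B₃} : Set (ℝ × ℝ))))
    -- the intersection points of corresponding sides
    (hM₁₂ : Collinear ℝ ({A₁, A₂, M₁₂} : Set (ℝ × ℝ)) ∧
            Collinear ℝ ({B₁, B₂, M₁₂} : Set (ℝ × ℝ)))
    (hM₁₃ : Collinear ℝ ({A₁, A₃, M₁₃} : Set (ℝ × ℝ)) ∧
            Collinear ℝ ({B₁, B₃, M₁₃} : Set (ℝ × ℝ)))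
    (hM₂₃ : Collinear ℝ ({A₂, A₃, M₂₃} : Set (ℝ × ℝ)) ∧
            Collinear ℝ ({B₂, B₃, M₂₃} : Set (ℝ × ℝ))) :
    Collinear ℝ ({M₁₂, M₁₃, M₂₃} : Set (ℝ × ℝ)) := by
  obtain ⟨hAB₁, hAB₂, hAB₃⟩ := hAB
  obtain ⟨hSA₁, hSA₂, hSA₃, hSB₁, hSB₂, hSB₃⟩ := hS
  rw [collinear_iff_cr] at hp₁ hp₂ hp₃
  obtain ⟨h12a, h12b⟩ := hM₁₂
  obtain ⟨h13a, h13b⟩ := hM₁₃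
  obtain ⟨h23a, h23b⟩ := hM₂₃
  rw [collinear_iff_cr] at h12a h12b h13a h13b h23a h23b
  rw [collinear_iff_cr, collinear_iff_cr] at hd₁₂ hd₁₃ hd₂₃
  rw [collinear_iff_cr]
  obtain ⟨t₁, hb₁⟩ := exists_smul_of_cr hp₁ (sub_ne_zero.mpr (Ne.symm hSA₁))
  obtain ⟨t₂, hb₂⟩ := exists_smul_of_cr hp₂ (sub_ne_zero.mpr (Ne.symm hSA₂))
  obtain ⟨t₃, hb₃⟩ := exists_smul_of_cr hp₃ (sub_ne_zero.mpr (Ne.symm hSA₃))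
  have hB₁ : B₁ = t₁ • (A₁ - S) + S := by rw [← hb₁]; abel
  have hB₂ : B₂ = t₂ • (A₂ - S) + S := by rw [← hb₂]; abel
  have hB₃ : B₃ = t₃ • (A₃ - S) + S := by rw [← hb₃]; abel
  subst hB₁ hB₂ hB₃
  have ht₁0 : t₁ ≠ 0 := by rintro rfl; exact hSB₁ (by simp)
  have ht₂0 : t₂ ≠ 0 := by rintro rfl; exact hSB₂ (by simp)
  have ht₃0 : t₃ ≠ 0 := by rintro rfl; exact hSB₃ (by simp)
  have ht₁1 : t₁ ≠ 1 := by rintro rfl; exact hAB₁ (by rw [one_smul]; abel)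
  have ht₂1 : t₂ ≠ 1 := by rintro rfl; exact hAB₂ (by rw [one_smul]; abel)
  have ht₃1 : t₃ ≠ 1 := by rintro rfl; exact hAB₃ (by rw [one_smul]; abel)
  clear hp₁ hp₂ hp₃ hb₁ hb₂ hb₃ hA hB hSA₁ hSA₂ hSA₃ hSB₁ hSB₂ hSB₃ hAB₁ hAB₂ hAB₃
  obtain ⟨s1, s2⟩ := S
  obtain ⟨a11, a12⟩ := A₁
  obtain ⟨a21, a22⟩ := A₂
  obtain ⟨a31, a32⟩ := A₃
  obtain ⟨m121, m122⟩ := M₁₂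
  obtain ⟨m131, m132⟩ := M₁₃
  obtain ⟨m231, m232⟩ := M₂₃
  simp only [cr, Prod.mk_sub_mk, Prod.smul_mk, Prod.mk_add_mk, smul_eq_mul, Prod.fst,
    Prod.snd] at h12a h12b h13a h13b h23a h23b hd₁₂ hd₁₃ hd₂₃ ⊢
  -- nondegenerate pairs (Aᵢ, Aⱼ, S not collinear)
  have hd12 : (a11 - s1) * (a22 - s2) - (a12 - s2) * (a21 - s1) ≠ 0 := by
    intro h0
    exact hd₁₂ ⟨by linear_combination (1 - t₁) * h0, by linear_combination (1 - t₂) * h0⟩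
  have hd13 : (a11 - s1) * (a32 - s2) - (a12 - s2) * (a31 - s1) ≠ 0 := by
    intro h0
    exact hd₁₃ ⟨by linear_combination (1 - t₁) * h0, by linear_combination (1 - t₃) * h0⟩
  have hd23 : (a21 - s1) * (a32 - s2) - (a22 - s2) * (a31 - s1) ≠ 0 := by
    intro h0
    exact hd₂₃ ⟨by linear_combination (1 - t₂) * h0, by linear_combination (1 - t₃) * h0⟩
  -- the ratios are pairwise distinct
  have ht12 : t₁ - t₂ ≠ 0 := by
    rw [sub_ne_zero]
    intro h
    subst h
    have key : t₁ * (1 - t₁) * ((a11 - s1) * (a22 - s2) - (a12 - s2) * (a21 - s1)) = 0 := by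
      linear_combination t₁ * h12a - h12b
    rcases mul_eq_zero.mp key with h' | h'
    · rcases mul_eq_zero.mp h' with h'' | h''
      · exact ht₁0 h''
      · exact ht₁1 (by linarith)
    · exact hd12 h'
  have ht13 : t₁ - t₃ ≠ 0 := by
    rw [sub_ne_zero]
    intro h
    subst h
    have key : t₁ * (1 - t₁) * ((a11 - s1) * (a32 - s2) - (a12 - s2) * (a31 - s1)) = 0 := by
      linear_combination t₁ * h13a - h13b
    rcases mul_eq_zero.mp key with h' | h'
    · rcases mul_eq_zero.mp h' with h'' | h''
      · exact ht₁0 h''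
      · exact ht₁1 (by linarith)
    · exact hd13 h'
  have ht23 : t₂ - t₃ ≠ 0 := by
    rw [sub_ne_zero]
    intro h
    subst h
    have key : t₂ * (1 - t₂) * ((a21 - s1) * (a32 - s2) - (a22 - s2) * (a31 - s1)) = 0 := by
      linear_combination t₂ * h23a - h23b
    rcases mul_eq_zero.mp key with h' | h'
    · rcases mul_eq_zero.mp h' with h'' | h''
      · exact ht₂0 h''
      · exact ht₂1 (by linarith)
    · exact hd23 h'
  -- explicit coordinates of the intersection points
  have hm121 : m121 = s1 + (t₁ * (1 - t₂) * (a11 - s1) - t₂ * (1 - t₁) * (a21 - s1)) / (t₁ - t₂) := by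
    have h2 : (m121 - s1) * (t₁ - t₂) =
        t₁ * (1 - t₂) * (a11 - s1) - t₂ * (1 - t₁) * (a21 - s1) :=
      mul_right_cancel₀ hd12 (by linear_combination (t₂ * (a21 - s1) - t₁ * (a11 - s1)) * h12a - (a21 - a11) * h12b)
    field_simp
    linear_combination h2
  have hm122 : m122 = s2 + (t₁ * (1 - t₂) * (a12 - s2) - t₂ * (1 - t₁) * (a22 - s2)) / (t₁ - t₂) := by
    have h2 : (m122 - s2) * (t₁ - t₂) =
        t₁ * (1 - t₂) * (a12 - s2) - t₂ * (1 - t₁) * (a22 - s2) :=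
      mul_right_cancel₀ hd12 (by linear_combination (t₂ * (a22 - s2) - t₁ * (a12 - s2)) * h12a - (a22 - a12) * h12b)
    field_simp
    linear_combination h2
  have hm131 : m131 = s1 + (t₁ * (1 - t₃) * (a11 - s1) - t₃ * (1 - t₁) * (a31 - s1)) / (t₁ - t₃) := by
    have h2 : (m131 - s1) * (t₁ - t₃) =
        t₁ * (1 - t₃) * (a11 - s1) - t₃ * (1 - t₁) * (a31 - s1) :=
      mul_right_cancel₀ hd13 (by linear_combination (t₃ * (a31 - s1) - t₁ * (a11 - s1)) * h13a - (a31 - a11) * h13b)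
    field_simp
    linear_combination h2
  have hm132 : m132 = s2 + (t₁ * (1 - t₃) * (a12 - s2) - t₃ * (1 - t₁) * (a32 - s2)) / (t₁ - t₃) := by
    have h2 : (m132 - s2) * (t₁ - t₃) =
        t₁ * (1 - t₃) * (a12 - s2) - t₃ * (1 - t₁) * (a32 - s2) :=
      mul_right_cancel₀ hd13 (by linear_combination (t₃ * (a32 - s2) - t₁ * (a12 - s2)) * h13a - (a32 - a12) * h13b)
    field_simp
    linear_combination h2
  have hm231 : m231 = s1 + (t₂ * (1 - t₃) * (a21 - s1) - t₃ * (1 - t₂) * (a31 - s1)) / (t₂ - t₃) := by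
    have h2 : (m231 - s1) * (t₂ - t₃) =
        t₂ * (1 - t₃) * (a21 - s1) - t₃ * (1 - t₂) * (a31 - s1) :=
      mul_right_cancel₀ hd23 (by linear_combination (t₃ * (a31 - s1) - t₂ * (a21 - s1)) * h23a - (a31 - a21) * h23b)
    field_simp
    linear_combination h2
  have hm232 : m232 = s2 + (t₂ * (1 - t₃) * (a22 - s2) - t₃ * (1 - t₂) * (a32 - s2)) / (t₂ - t₃) := by
    have h2 : (m232 - s2) * (t₂ - t₃) =
        t₂ * (1 - t₃) * (a22 - s2) - t₃ * (1 - t₂) * (a32 - s2) :=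
      mul_right_cancel₀ hd23 (by linear_combination (t₃ * (a32 - s2) - t₂ * (a22 - s2)) * h23a - (a32 - a22) * h23b)
    field_simp
    linear_combination h2
  rw [hm121, hm122, hm131, hm132, hm231, hm232]
  field_simp
  ring
end

section
/- Pappus' hexagon theorem for the Euclidean plane: If A₁, A₂, A₃ are distinct points on a line g_a and B₁, B₂, B₃ are distinct points on a line g_b in ℝ², and the points M₁ = line(A₁B₁) ∩ line(A₃B₂), M₂ = line(A₂B₂) ∩ line(A₁B₃), M₃ = line(A₃B₃) ∩ line(A₂B₁) all exist, then M₁, M₂, M₃ are collinear. -/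
/-!
In homogeneous coordinates, with `[x y z]` the determinant of three points, the line `p q`
meets the line `r s` in `[p q s] r - [p q r] s`. For the three intersection points of the
Pappus configuration, the trilinear expansion of their bracket collapses to
`[A₁B₁B₂][A₂B₂B₃][A₃B₃B₁][A₁A₂A₃] - [A₁B₁A₃][A₂B₂A₁][A₃B₃A₂][B₁B₂B₃]`,
which vanishes as soon as both triples `Aᵢ` and `Bᵢ` are collinear.
-/

open Matrix

namespace Pappus

section CommRing

variable {R : Type*} [CommRing R]

def bracket (u v w : Fin 3 → R) : R := (of ![u, v, w]).det

def meet (p q r s : Fin 3 → R) : Fin 3 → R := bracket p q s • r - bracket p q r • s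

theorem bracket_smul_smul_smul (a b c : R) (u v w : Fin 3 → R) :
    bracket (a • u) (b • v) (c • w) = a * b * c * bracket u v w := by
  simp only [bracket, det_fin_three, of_apply, cons_val_zero, cons_val_one, cons_val_two,
    head_cons, tail_cons, Pi.smul_apply, smul_eq_mul]
  ring

-- Of the eight terms of the trilinear expansion, the six mixed ones cancel in pairs.
theorem pappus_bracket_identity (a₁ a₂ a₃ b₁ b₂ b₃ : Fin 3 → R) :
    bracket (meet a₁ b₁ a₃ b₂) (meet a₂ b₂ a₁ b₃) (meet a₃ b₃ a₂ b₁) =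
      bracket a₁ b₁ b₂ * bracket a₂ b₂ b₃ * bracket a₃ b₃ b₁ * bracket a₁ a₂ a₃ -
        bracket a₁ b₁ a₃ * bracket a₂ b₂ a₁ * bracket a₃ b₃ a₂ * bracket b₁ b₂ b₃ := by
  simp only [meet, bracket, det_fin_three, of_apply, cons_val_zero, cons_val_one, cons_val_two,
    head_cons, tail_cons, Pi.sub_apply, Pi.smul_apply, smul_eq_mul]
  ring

end CommRing

def homCoord (p : ℝ × ℝ) : Fin 3 → ℝ := ![p.1, p.2, 1]

theorem homCoord_injective : Function.Injective homCoord :=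
  fun _ _ h => Prod.ext (congrFun h 0) (congrFun h 1)

theorem vecMul_homCoord_eq_zero_iff (w : Fin 3 → ℝ) (p q r : ℝ × ℝ) :
    w ᵥ* of ![homCoord p, homCoord q, homCoord r] = 0 ↔
      ∑ i, w i • ![p, q, r] i = 0 ∧ ∑ i, w i = 0 := by
  simp [funext_iff, Fin.forall_fin_succ, Prod.ext_iff, Fin.sum_univ_three, homCoord, vecHead,
    vecTail, add_assoc, and_assoc]

theorem collinear_iff_bracket_eq_zero {p q r : ℝ × ℝ} :
    Collinear ℝ {p, q, r} ↔ bracket (homCoord p) (homCoord q) (homCoord r) = 0 := by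
  rw [collinear_iff_not_affineIndependent_set, affineIndependent_iff_of_fintype, bracket,
    ← exists_vecMul_eq_zero_iff]
  simp only [vecMul_homCoord_eq_zero_iff, not_forall, exists_prop]
  constructor
  · rintro ⟨w, hw, hwp, i, hwi⟩
    rw [Finset.weightedVSub_eq_linear_combination _ hw] at hwp
    exact ⟨w, ne_of_apply_ne (· i) hwi, hwp, hw⟩
  · rintro ⟨w, hw0, hwp, hw⟩
    rw [← Finset.weightedVSub_eq_linear_combination _ hw] at hwp
    exact ⟨w, hw, hwp, Function.ne_iff.mp hw0⟩

theorem meet_eq_smul_homCoord {p q r s m : ℝ × ℝ}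
    (hpqm : Collinear ℝ {p, q, m}) (hrsm : Collinear ℝ {r, s, m}) :
    meet (homCoord p) (homCoord q) (homCoord r) (homCoord s) =
      (bracket (homCoord p) (homCoord q) (homCoord s) -
        bracket (homCoord p) (homCoord q) (homCoord r)) • homCoord m := by
  rw [collinear_iff_bracket_eq_zero] at hpqm hrsm
  simp only [bracket, det_fin_three, homCoord, of_apply, cons_val_zero, cons_val_one,
    cons_val_two, head_cons, tail_cons] at hpqm hrsm
  -- For the lines `n = p ×₃ q` and `l = r ×₃ s` in homogeneous coordinates, the coefficients
  -- are entries of `n` and `l` in `(n ×₃ l) ×₃ m = (n ⬝ᵥ m) • l - (l ⬝ᵥ m) • n`.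
  ext i
  fin_cases i <;> simp only [meet, bracket, homCoord, det_fin_three, of_apply, cons_val',
    cons_val_zero, cons_val_fin_one, cons_val_one, cons_val, smul_cons, smul_eq_mul, smul_empty,
    Fin.zero_eta, Fin.mk_one, Fin.reduceFinMk, Pi.sub_apply, Pi.smul_apply]
  · linear_combination (r.1 - s.1) * hpqm + (q.1 - p.1) * hrsm
  · linear_combination (r.2 - s.2) * hpqm + (q.2 - p.2) * hrsm
  · ring

theorem bracket_sub_bracket_ne_zero {p q r s m : ℝ × ℝ}
    (hpqm : Collinear ℝ {p, q, m}) (hrsm : Collinear ℝ {r, s, m}) (hrs : r ≠ s)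
    (hpqrs : ¬(Collinear ℝ {p, q, r} ∧ Collinear ℝ {p, q, s})) :
    bracket (homCoord p) (homCoord q) (homCoord s) -
      bracket (homCoord p) (homCoord q) (homCoord r) ≠ 0 := by
  intro hD
  have hsr := sub_eq_zero.mp hD
  have hmeet := meet_eq_smul_homCoord hpqm hrsm
  rw [hD, zero_smul, meet, hsr, ← smul_sub] at hmeet
  rcases smul_eq_zero.mp hmeet with hr | hrs'
  · exact hpqrs ⟨collinear_iff_bracket_eq_zero.mpr hr,
      collinear_iff_bracket_eq_zero.mpr (hsr.trans hr)⟩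
  · exact hrs (homCoord_injective (sub_eq_zero.mp hrs'))

end Pappus

open Pappus

theorem pappus_euclidean_plane_general
    (A₁ A₂ A₃ B₁ B₂ B₃ M₁ M₂ M₃ : ℝ × ℝ)
    (hA : Collinear ℝ ({A₁, A₂, A₃} : Set (ℝ × ℝ)))
    (hB : Collinear ℝ ({B₁, B₂, B₃} : Set (ℝ × ℝ)))
    (hABdist : A₁ ≠ B₁ ∧ A₁ ≠ B₂ ∧ A₁ ≠ B₃ ∧ A₂ ≠ B₁ ∧ A₂ ≠ B₂ ∧ A₂ ≠ B₃ ∧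
               A₃ ≠ B₁ ∧ A₃ ≠ B₂ ∧ A₃ ≠ B₃)
    -- the relevant pairs of lines are distinct so the intersection points exist
    (hd₁ : ¬ (Collinear ℝ ({A₁, B₁, A₃} : Set (ℝ × ℝ)) ∧
              Collinear ℝ ({A₁, B₁, B₂} : Set (ℝ × ℝ))))
    (hd₂ : ¬ (Collinear ℝ ({A₂, B₂, A₁} : Set (ℝ × ℝ)) ∧
              Collinear ℝ ({A₂, B₂, B₃} : Set (ℝ × ℝ))))
    (hd₃ : ¬ (Collinear ℝ ({A₃, B₃, A₂} : Set (ℝ × ℝ)) ∧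
              Collinear ℝ ({A₃, B₃, B₁} : Set (ℝ × ℝ))))
    -- the three intersection points
    (hM₁ : Collinear ℝ ({A₁, B₁, M₁} : Set (ℝ × ℝ)) ∧
           Collinear ℝ ({A₃, B₂, M₁} : Set (ℝ × ℝ)))
    (hM₂ : Collinear ℝ ({A₂, B₂, M₂} : Set (ℝ × ℝ)) ∧
           Collinear ℝ ({A₁, B₃, M₂} : Set (ℝ × ℝ)))
    (hM₃ : Collinear ℝ ({A₃, B₃, M₃} : Set (ℝ × ℝ)) ∧
           Collinear ℝ ({A₂, B₁, M₃} : Set (ℝ × ℝ))) :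
    Collinear ℝ ({M₁, M₂, M₃} : Set (ℝ × ℝ)) := by
  obtain ⟨-, -, h₁₃, h₂₁, -, -, -, h₃₂, -⟩ := hABdist
  have hD₁ := bracket_sub_bracket_ne_zero hM₁.1 hM₁.2 h₃₂ hd₁
  have hD₂ := bracket_sub_bracket_ne_zero hM₂.1 hM₂.2 h₁₃ hd₂
  have hD₃ := bracket_sub_bracket_ne_zero hM₃.1 hM₃.2 h₂₁ hd₃
  rw [collinear_iff_bracket_eq_zero] at hA hB ⊢
  refine (mul_eq_zero.mp ?_).resolve_left (mul_ne_zero (mul_ne_zero hD₁ hD₂) hD₃)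
  rw [← bracket_smul_smul_smul, ← meet_eq_smul_homCoord hM₁.1 hM₁.2,
    ← meet_eq_smul_homCoord hM₂.1 hM₂.2, ← meet_eq_smul_homCoord hM₃.1 hM₃.2,
    pappus_bracket_identity, hA, hB]
  ring

/-- Pappus' hexagon theorem in the Euclidean plane ℝ²: if A₁, A₂, A₃ are distinct
points on one line and B₁, B₂, B₃ are distinct points on another line, and the
intersection points M₁ = A₁B₁ ∩ A₃B₂, M₂ = A₂B₂ ∩ A₁B₃, M₃ = A₃B₃ ∩ A₂B₁ exist,
then M₁, M₂, M₃ are collinear. -/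
theorem pappus_euclidean_plane
    (A₁ A₂ A₃ B₁ B₂ B₃ M₁ M₂ M₃ : ℝ × ℝ)
    (hA : Collinear ℝ ({A₁, A₂, A₃} : Set (ℝ × ℝ)))
    (hB : Collinear ℝ ({B₁, B₂, B₃} : Set (ℝ × ℝ)))
    (hAdist : A₁ ≠ A₂ ∧ A₁ ≠ A₃ ∧ A₂ ≠ A₃)
    (hBdist : B₁ ≠ B₂ ∧ B₁ ≠ B₃ ∧ B₂ ≠ B₃)
    (hABdist : A₁ ≠ B₁ ∧ A₁ ≠ B₂ ∧ A₁ ≠ B₃ ∧ A₂ ≠ B₁ ∧ A₂ ≠ B₂ ∧ A₂ ≠ B₃ ∧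
               A₃ ≠ B₁ ∧ A₃ ≠ B₂ ∧ A₃ ≠ B₃)
    -- the relevant pairs of lines are distinct so the intersection points exist
    (hd₁ : ¬ (Collinear ℝ ({A₁, B₁, A₃} : Set (ℝ × ℝ)) ∧
              Collinear ℝ ({A₁, B₁, B₂} : Set (ℝ × ℝ))))
    (hd₂ : ¬ (Collinear ℝ ({A₂, B₂, A₁} : Set (ℝ × ℝ)) ∧
              Collinear ℝ ({A₂, B₂, B₃} : Set (ℝ × ℝ))))
    (hd₃ : ¬ (Collinear ℝ ({A₃, B₃, A₂} : Set (ℝ × ℝ)) ∧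
              Collinear ℝ ({A₃, B₃, B₁} : Set (ℝ × ℝ))))
    -- the three intersection points
    (hM₁ : Collinear ℝ ({A₁, B₁, M₁} : Set (ℝ × ℝ)) ∧
           Collinear ℝ ({A₃, B₂, M₁} : Set (ℝ × ℝ)))
    (hM₂ : Collinear ℝ ({A₂, B₂, M₂} : Set (ℝ × ℝ)) ∧
           Collinear ℝ ({A₁, B₃, M₂} : Set (ℝ × ℝ)))
    (hM₃ : Collinear ℝ ({A₃, B₃, M₃} : Set (ℝ × ℝ)) ∧
           Collinear ℝ ({A₂, B₁, M₃} : Set (ℝ × ℝ))) :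
    Collinear ℝ ({M₁, M₂, M₃} : Set (ℝ × ℝ)) :=
  pappus_euclidean_plane_general A₁ A₂ A₃ B₁ B₂ B₃ M₁ M₂ M₃ hA hB hABdist hd₁ hd₂ hd₃ hM₁ hM₂ hM₃
end

section
/- Menelaus' theorem in the Euclidean plane with signed ratios: For a triangle A₀A₁A₂ in ℝ² and points P on line(A₀A₁), Q on line(A₁A₂), R on line(A₂A₀), none equal to a vertex, the points P, Q, R are collinear if and only if the product of signed simple ratios s(A₀,P,A₁)·s(A₁,Q,A₂)·s(A₂,R,A₀) = −1, where s(A,P,B) is the unique real λ with P − A = λ·(B − P). -/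
/-!
Write `P - A₀ = λ₀ • (A₁ - P)` as `(1 + λ₀) • P = A₀ + λ₀ • A₁`, and similarly for `Q` and `R`.
Expanding the planar cross product bilinearly in these barycentric expressions gives
`(1 + λ₀)(1 + λ₁)(1 + λ₂) · [P, Q, R] = (1 + λ₀λ₁λ₂) · [A₀, A₁, A₂]`, where `[X, Y, Z]` is the
cross product of `Y - X` and `Z - X`. The triangle is non-degenerate, so `[A₀, A₁, A₂] ≠ 0` and
no `λᵢ` equals `-1`; hence `[P, Q, R]` vanishes exactly when `λ₀λ₁λ₂ = -1`.
-/

namespace Menelaus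

def cross {K : Type*} [CommRing K] (u v : K × K) : K := u.1 * v.2 - u.2 * v.1

section Field

variable {K : Type*} [Field K]

theorem exists_eq_smul_of_cross_eq_zero {u w : K × K} (hu : u ≠ 0) (h : cross u w = 0) :
    ∃ t : K, w = t • u := by
  unfold cross at h
  by_cases h₁ : u.1 = 0
  · have h₂ : u.2 ≠ 0 := fun h₂ => hu (Prod.ext h₁ h₂)
    refine ⟨w.2 / u.2, Prod.ext ?_ ?_⟩ <;> simp only [Prod.smul_fst, Prod.smul_snd, smul_eq_mul]
    · field_simp
      linear_combination -h
    · field_simp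
  · refine ⟨w.1 / u.1, Prod.ext ?_ ?_⟩ <;> simp only [Prod.smul_fst, Prod.smul_snd, smul_eq_mul]
    · field_simp
    · field_simp
      linear_combination h

theorem collinear_iff_cross_sub_eq_zero (p q r : K × K) :
    Collinear K ({p, q, r} : Set (K × K)) ↔ cross (q - p) (r - p) = 0 := by
  constructor
  · intro h
    obtain ⟨v, hv⟩ := (collinear_iff_of_mem (Set.mem_insert p _)).mp h
    obtain ⟨s, rfl⟩ := hv q (by simp)
    obtain ⟨t, rfl⟩ := hv r (by simp)
    simp only [cross, vadd_eq_add, add_sub_cancel_right, Prod.smul_fst, Prod.smul_snd,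
      smul_eq_mul]
    ring
  · intro h
    by_cases hqp : q - p = 0
    · rw [sub_eq_zero.mp hqp, Set.insert_eq_of_mem (Set.mem_insert p _)]
      exact collinear_pair K p r
    obtain ⟨t, ht⟩ := exists_eq_smul_of_cross_eq_zero hqp h
    have hr : r ∈ line[K, p, q] := by
      rw [eq_add_of_sub_eq ht, ← vsub_eq_sub, ← vadd_eq_add, ← AffineMap.lineMap_apply]
      exact AffineMap.lineMap_mem_affineSpan_pair t p q
    rw [Set.pair_comm q r, Set.insert_comm p r]
    exact collinear_insert_of_mem_affineSpan_pair hr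

end Field

section Module

variable {R M : Type*} [Ring R] [AddCommGroup M] [Module R M]

theorem one_add_smul_eq_of_sub_eq_smul_sub {A B P : M} {l : R} (h : P - A = l • (B - P)) :
    (1 + l) • P = A + l • B := by
  rw [← sub_eq_zero] at h ⊢
  rw [← h, add_smul, one_smul, smul_sub]
  abel

theorem one_add_ne_zero_of_sub_eq_smul_sub {A B P : M} {l : R} (hAB : A ≠ B)
    (h : P - A = l • (B - P)) : 1 + l ≠ 0 := by
  intro hl
  have h' := one_add_smul_eq_of_sub_eq_smul_sub h
  rw [hl, zero_smul, eq_neg_of_add_eq_zero_right hl, neg_one_smul, ← sub_eq_add_neg,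
    eq_comm, sub_eq_zero] at h'
  exact hAB h'

end Module

theorem one_add_mul_cross_eq {K : Type*} [CommRing K] {A₀ A₁ A₂ P Q R : K × K} {l₀ l₁ l₂ : K}
    (hP : P - A₀ = l₀ • (A₁ - P)) (hQ : Q - A₁ = l₁ • (A₂ - Q)) (hR : R - A₂ = l₂ • (A₀ - R)) :
    (1 + l₀) * (1 + l₁) * (1 + l₂) * cross (Q - P) (R - P) =
      (1 + l₀ * l₁ * l₂) * cross (A₁ - A₀) (A₂ - A₀) := by
  calc (1 + l₀) * (1 + l₁) * (1 + l₂) * cross (Q - P) (R - P)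
      = (1 + l₂) * cross ((1 + l₀) • P) ((1 + l₁) • Q)
        + (1 + l₀) * cross ((1 + l₁) • Q) ((1 + l₂) • R)
        + (1 + l₁) * cross ((1 + l₂) • R) ((1 + l₀) • P) := by
        simp only [cross, Prod.fst_sub, Prod.snd_sub, Prod.smul_fst, Prod.smul_snd, smul_eq_mul]
        ring
    _ = (1 + l₂) * cross (A₀ + l₀ • A₁) (A₁ + l₁ • A₂)
        + (1 + l₀) * cross (A₁ + l₁ • A₂) (A₂ + l₂ • A₀)
        + (1 + l₁) * cross (A₂ + l₂ • A₀) (A₀ + l₀ • A₁) := by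
        rw [one_add_smul_eq_of_sub_eq_smul_sub hP, one_add_smul_eq_of_sub_eq_smul_sub hQ,
          one_add_smul_eq_of_sub_eq_smul_sub hR]
    _ = (1 + l₀ * l₁ * l₂) * cross (A₁ - A₀) (A₂ - A₀) := by
        simp only [cross, Prod.fst_sub, Prod.snd_sub, Prod.fst_add, Prod.snd_add, Prod.smul_fst,
          Prod.smul_snd, smul_eq_mul]
        ring

end Menelaus

open Menelaus in
theorem menelaus_euclidean_plane_general
    (A₀ A₁ A₂ P Q R : ℝ × ℝ) (lam₀ lam₁ lam₂ : ℝ)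
    (hind : AffineIndependent ℝ ![A₀, A₁, A₂])
    (hlam₀ : P - A₀ = lam₀ • (A₁ - P))
    (hlam₁ : Q - A₁ = lam₁ • (A₂ - Q))
    (hlam₂ : R - A₂ = lam₂ • (A₀ - R)) :
    Collinear ℝ ({P, Q, R} : Set (ℝ × ℝ)) ↔ lam₀ * lam₁ * lam₂ = -1 := by
  have hncol := affineIndependent_iff_not_collinear_set.mp hind
  have hA : cross (A₁ - A₀) (A₂ - A₀) ≠ 0 :=
    mt (collinear_iff_cross_sub_eq_zero _ _ _).mpr hncol
  have hl : (1 + lam₀) * (1 + lam₁) * (1 + lam₂) ≠ 0 := by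
    refine mul_ne_zero (mul_ne_zero ?_ ?_) ?_
    · exact one_add_ne_zero_of_sub_eq_smul_sub (ne₁₂_of_not_collinear hncol) hlam₀
    · exact one_add_ne_zero_of_sub_eq_smul_sub (ne₂₃_of_not_collinear hncol) hlam₁
    · exact one_add_ne_zero_of_sub_eq_smul_sub (ne₁₃_of_not_collinear hncol).symm hlam₂
  rw [collinear_iff_cross_sub_eq_zero, ← mul_eq_zero_iff_left hl,
    one_add_mul_cross_eq hlam₀ hlam₁ hlam₂, mul_eq_zero, or_iff_left hA, add_eq_zero_iff_neg_eq,
    eq_comm]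

/-- Menelaus' theorem in the Euclidean plane with signed simple ratios: for a triangle
A₀A₁A₂ in ℝ² and points P, Q, R on the lines A₀A₁, A₁A₂, A₂A₀ (none a vertex), with
signed ratios λ₀, λ₁, λ₂ defined by P − A₀ = λ₀·(A₁ − P) etc., the points P, Q, R are
collinear iff λ₀·λ₁·λ₂ = −1. -/
theorem menelaus_euclidean_plane
    (A₀ A₁ A₂ P Q R : ℝ × ℝ) (lam₀ lam₁ lam₂ : ℝ)
    (hind : AffineIndependent ℝ ![A₀, A₁, A₂])
    (hP : Collinear ℝ ({A₀, A₁, P} : Set (ℝ × ℝ)))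
    (hQ : Collinear ℝ ({A₁, A₂, Q} : Set (ℝ × ℝ)))
    (hR : Collinear ℝ ({A₂, A₀, R} : Set (ℝ × ℝ)))
    (hPne : P ≠ A₀ ∧ P ≠ A₁) (hQne : Q ≠ A₁ ∧ Q ≠ A₂) (hRne : R ≠ A₂ ∧ R ≠ A₀)
    (hlam₀ : P - A₀ = lam₀ • (A₁ - P))
    (hlam₁ : Q - A₁ = lam₁ • (A₂ - Q))
    (hlam₂ : R - A₂ = lam₂ • (A₀ - R)) :
    Collinear ℝ ({P, Q, R} : Set (ℝ × ℝ)) ↔ lam₀ * lam₁ * lam₂ = -1 :=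
  menelaus_euclidean_plane_general A₀ A₁ A₂ P Q R lam₀ lam₁ lam₂ hind hlam₀ hlam₁ hlam₂
end
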